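/- No one-state Turing machine recognizes the language {1} over the alphabet {1}: for every one-state Turing machine M, if M halts on the input string '1', then M also halts on the string 1^k for every k ≥ 1. -/

import Mathlib

inductive Dir : Type
  | L | R
deriving DecidableEq

def Dir.move : Dir → ℤ
  | .L => -1
  | .R => 1

/-- A one-state Turing machine: a blank symbol, a set of halting symbols
(as a Boolean predicate) and a transition function on the tape alphabet. -/
structure OneStateTM (Γ : Type) where
  blank : Γ
  halt : Γ → Bool
  δ : Γ → Γ × Dir

/-- A configuration: a bi-infinite tape and a head position. -/
structure Cfg (Γ : Type) where
  tape : ℤ → Γ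
  pos : ℤ

/-- One step of the machine; `none` means the machine has halted
(the head reads a halting symbol). -/
def OneStateTM.step {Γ : Type} (M : OneStateTM Γ) (c : Cfg Γ) : Option (Cfg Γ) :=
  if M.halt (c.tape c.pos) then none
  else some ⟨Function.update c.tape c.pos (M.δ (c.tape c.pos)).1,
             c.pos + (M.δ (c.tape c.pos)).2.move⟩

/-- Initial tape: the input written in cells 0,…,len−1, blanks elsewhere. -/
def OneStateTM.initTape {Γ : Type} (M : OneStateTM Γ) (l : List Γ) : ℤ → Γ :=
  fun i => if i < 0 then M.blank else l.getD i.toNat M.blank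

/-- The machine halts starting from configuration `c`. -/
def OneStateTM.HaltsFrom {Γ : Type} (M : OneStateTM Γ) (c : Cfg Γ) : Prop :=
  ∃ n : ℕ, (fun o => Option.bind o M.step)^[n] (some c) = none

/-- The machine halts on input `l` (head initially on the leftmost input symbol). -/
def OneStateTM.HaltsOn {Γ : Type} (M : OneStateTM Γ) (l : List Γ) : Prop :=
  M.HaltsFrom ⟨M.initTape l, 0⟩

/-!
With a single state, a non-halting blank always moves the head the same way, so a head with
nothing but blanks ahead of it in that direction runs forever. Hence a halting run that starts
behind that direction, with only blanks beyond, never crosses over, and it halts equally from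
any configuration agreeing with it (up to translation) on that half-line.

If the first move on `1` goes right, the machine on `1^k` sweeps over the whole block writing
one and the same symbol, and then looks like the machine on `1` after one step, shifted by
`k - 1`; if it goes left, both runs agree on the left half-line after one step. In either case a
blank that carries the head away from the input would make the run on `1` diverge.
-/

namespace Dir

theorem move_mul_self (d : Dir) : d.move * d.move = 1 := by
  cases d <;> rfl

end Dir

namespace OneStateTM

open Function

variable {Γ : Type} (M : OneStateTM Γ)

def run (n : ℕ) (c : Cfg Γ) : Option (Cfg Γ) :=
  (fun o => Option.bind o M.step)^[n] (some c)

theorem run_succ (n : ℕ) (c : Cfg Γ) : M.run (n + 1) c = (M.step c).bind (M.run n) := by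
  change (fun o => Option.bind o M.step)^[n] (M.step c) = _
  cases M.step c with
  | none => exact iterate_fixed (f := fun o => Option.bind o M.step) rfl n
  | some c' => rfl

variable {M}

theorem step_of_halt {c : Cfg Γ} {a : Γ} (hread : c.tape c.pos = a) (ha : M.halt a = true) :
    M.step c = none := by
  simp [step, hread, ha]

theorem step_of_not_halt {c : Cfg Γ} {a : Γ} (hread : c.tape c.pos = a)
    (ha : M.halt a = false) :
    M.step c = some ⟨update c.tape c.pos (M.δ a).1, c.pos + (M.δ a).2.move⟩ := by
  simp [step, hread, ha]

theorem haltsFrom_of_halt {c : Cfg Γ} {a : Γ} (hread : c.tape c.pos = a)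
    (ha : M.halt a = true) : M.HaltsFrom c :=
  ⟨1, show M.run 1 c = none by rw [run_succ, step_of_halt hread ha]; rfl⟩

theorem haltsFrom_iff_of_step_eq_some {c c' : Cfg Γ} (h : M.step c = some c') :
    M.HaltsFrom c ↔ M.HaltsFrom c' := by
  constructor
  · rintro ⟨_ | n, hn⟩
    · exact absurd hn (Option.some_ne_none c)
    · exact ⟨n, by rwa [← run, run_succ, h] at hn⟩
  · rintro ⟨n, hn⟩
    exact ⟨n + 1, show M.run (n + 1) c = none by rw [run_succ, h]; exact hn⟩

theorem haltsFrom_iff_of_sweep_right {a b : Γ} (ha : M.halt a = false) (hδ : M.δ a = (b, .R))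
    (c : Cfg Γ) (m : ℕ) (hc : ∀ i, c.pos ≤ i → i < c.pos + m → c.tape i = a) :
    M.HaltsFrom c ↔ M.HaltsFrom
      ⟨fun i => if c.pos ≤ i ∧ i < c.pos + m then b else c.tape i, c.pos + m⟩ := by
  induction m generalizing c with
  | zero =>
    have htape :
        (fun i => if c.pos ≤ i ∧ i < c.pos + (0 : ℕ) then b else c.tape i) = c.tape :=
      funext fun i => if_neg (by omega)
    rw [htape, Nat.cast_zero, add_zero]
  | succ m ih =>
    have hstep := step_of_not_halt (hc c.pos le_rfl (by omega)) ha
    rw [hδ] at hstep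
    dsimp only [Dir.move] at hstep
    rw [haltsFrom_iff_of_step_eq_some hstep, ih]
    · refine Iff.of_eq (congrArg M.HaltsFrom ?_)
      dsimp only
      congr 1
      · funext i
        rcases eq_or_ne i c.pos with rfl | hi
        · simp
        · simp only [update_of_ne hi]
          congr 1
          grind
      · push_cast
        ring
    · intro i hi hi'
      dsimp only at hi hi' ⊢
      rw [update_of_ne (by omega)]
      exact hc i (by omega) (by push_cast; omega)

-- `(M.δ M.blank).2.move = ±1` is the direction in which the head travels over blanks.
theorem not_haltsFrom_of_blank_ahead (hb : M.halt M.blank = false) (c : Cfg Γ)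
    (hc : ∀ i, (M.δ M.blank).2.move * c.pos ≤ (M.δ M.blank).2.move * i →
      c.tape i = M.blank) :
    ¬ M.HaltsFrom c := by
  rintro ⟨n, hn⟩
  induction n generalizing c with
  | zero => exact Option.some_ne_none c hn
  | succ n ih =>
    change M.run (n + 1) c = none at hn
    rw [run_succ, step_of_not_halt (hc c.pos le_rfl) hb] at hn
    refine ih _ (fun i hi => ?_) hn
    have hs := Dir.move_mul_self (M.δ M.blank).2
    dsimp only at hi ⊢
    rw [mul_add, hs] at hi
    rw [update_of_ne (by rintro rfl; linarith)]
    exact hc i (by linarith)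

theorem haltsFrom_of_agree_on_halfLine (hb : M.halt M.blank = false) {c c' : Cfg Γ} (d : ℤ)
    (hpos : (M.δ M.blank).2.move * c.pos ≤ 0)
    (hblank : ∀ i, 0 < (M.δ M.blank).2.move * i → c.tape i = M.blank)
    (hpos' : c'.pos = c.pos + d)
    (hagree : ∀ i, (M.δ M.blank).2.move * i ≤ 0 → c'.tape (i + d) = c.tape i)
    (h : M.HaltsFrom c) : M.HaltsFrom c' := by
  obtain ⟨n, hn⟩ := h
  induction n generalizing c c' with
  | zero => exact absurd hn (Option.some_ne_none c)
  | succ n ih =>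
    obtain ⟨a, hread⟩ : ∃ a, c.tape c.pos = a := ⟨_, rfl⟩
    have hread' : c'.tape c'.pos = a := by rw [hpos', hagree _ hpos, hread]
    cases hhalt : M.halt a with
    | true => exact haltsFrom_of_halt hread' hhalt
    | false =>
      rw [haltsFrom_iff_of_step_eq_some (step_of_not_halt hread' hhalt)]
      change M.run (n + 1) c = none at hn
      rw [run_succ, step_of_not_halt hread hhalt] at hn
      have hne : ∀ i, 0 < (M.δ M.blank).2.move * i → i ≠ c.pos := by
        rintro i hi rfl
        linarith
      by_cases hin : (M.δ M.blank).2.move * (c.pos + (M.δ a).2.move) ≤ 0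
      · refine ih hin (fun i hi => ?_) (by simp only [hpos']; ring) (fun i hi => ?_) hn
        all_goals dsimp only
        · rw [update_of_ne (hne i hi), hblank i hi]
        · rcases eq_or_ne i c.pos with rfl | hi'
          · simp [hpos']
          · rw [update_of_ne hi', update_of_ne (by omega), hagree i hi]
      -- once the head leaves the half-line, it only ever sees blanks
      · refine absurd ⟨n, hn⟩ (not_haltsFrom_of_blank_ahead hb _ fun i hi => ?_)
        dsimp only at hi ⊢
        have hi' : 0 < (M.δ M.blank).2.move * i := by linarith
        rw [update_of_ne (hne i hi'), hblank i hi']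

theorem initTape_of_neg {l : List Γ} {i : ℤ} (hi : i < 0) : M.initTape l i = M.blank :=
  if_pos hi

theorem initTape_of_length_le {l : List Γ} {i : ℤ} (hi : l.length ≤ i) :
    M.initTape l i = M.blank := by
  rw [initTape, if_neg (by omega), List.getD_eq_default _ _ (by omega)]

theorem initTape_cons_zero (a : Γ) (l : List Γ) : M.initTape (a :: l) 0 = a := rfl

theorem initTape_replicate (a : Γ) (k : ℕ) (i : ℤ) :
    M.initTape (List.replicate k a) i = if 0 ≤ i ∧ i < k then a else M.blank := by
  split_ifs with hi
  · rw [initTape, if_neg (by omega)]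
    exact List.getD_replicate _ (by omega)
  · rcases lt_or_ge i 0 with hneg | hpos
    · exact initTape_of_neg hneg
    · exact initTape_of_length_le (by simp; omega)

theorem haltsOn_cons_of_move_left {a : Γ} (ha : M.halt a = false) (hδ : (M.δ a).2 = .L)
    (h1 : M.HaltsOn [a]) (l : List Γ) : M.HaltsOn (a :: l) := by
  have hstep : ∀ l : List Γ, M.HaltsOn (a :: l) ↔
      M.HaltsFrom ⟨update (M.initTape (a :: l)) 0 (M.δ a).1, -1⟩ := fun l =>
    haltsFrom_iff_of_step_eq_some <| by
      rw [step_of_not_halt (initTape_cons_zero (M := M) a l) ha, hδ]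
      rfl
  rw [hstep] at h1 ⊢
  cases hb : M.halt M.blank with
  | true =>
    exact haltsFrom_of_halt (by simp [initTape_of_neg]) hb
  | false =>
    cases hbd : (M.δ M.blank).2 with
    | L =>
      refine absurd h1 (not_haltsFrom_of_blank_ahead hb _ fun i hi => ?_)
      simp only [hbd, Dir.move] at hi
      dsimp only
      rw [update_of_ne (by omega), initTape_of_neg (by omega)]
    | R =>
      refine haltsFrom_of_agree_on_halfLine hb 0 (by simp [hbd, Dir.move])
        (fun i hi => ?_) (by simp) (fun i hi => ?_) h1
      all_goals simp only [hbd, Dir.move, one_mul] at hi; dsimp only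
      · rw [update_of_ne (by omega), initTape_of_length_le (by simp; omega)]
      · rw [add_zero]
        rcases eq_or_ne i 0 with rfl | hi0
        · simp
        · rw [update_of_ne hi0, update_of_ne hi0, initTape_of_neg (by omega),
            initTape_of_neg (by omega)]

theorem haltsOn_replicate_of_move_right {a : Γ} (ha : M.halt a = false) (hδ : (M.δ a).2 = .R)
    (h1 : M.HaltsOn [a]) {k : ℕ} (hk : 1 ≤ k) : M.HaltsOn (List.replicate k a) := by
  have hsweep : ∀ n : ℕ, M.HaltsOn (List.replicate n a) ↔
      M.HaltsFrom ⟨fun i => if 0 ≤ i ∧ i < n then (M.δ a).1 else M.blank, n⟩ := by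
    intro n
    rw [HaltsOn, haltsFrom_iff_of_sweep_right ha (Prod.ext rfl hδ) _ n
      (fun i h0 hn => by dsimp only at h0 hn; simp [initTape_replicate]; omega)]
    simp only [zero_add, initTape_replicate]
    congr! 3 with i
    grind
  rw [← List.replicate_one, hsweep] at h1
  rw [hsweep]
  cases hb : M.halt M.blank with
  | true => exact haltsFrom_of_halt (by simp) hb
  | false =>
    cases hbd : (M.δ M.blank).2 with
    | L =>
      refine haltsFrom_of_agree_on_halfLine hb (k - 1) (by simp [hbd, Dir.move])
        (fun i hi => ?_) (by simp) (fun i hi => ?_) h1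
      all_goals simp only [hbd, Dir.move] at hi; dsimp only
      · rw [if_neg (by omega)]
      · split_ifs <;> first | rfl | omega
    | R =>
      refine absurd h1 (not_haltsFrom_of_blank_ahead hb _ fun i hi => ?_)
      simp only [hbd, Dir.move] at hi
      dsimp only
      rw [if_neg (by omega)]

end OneStateTM

/-- no one-state TM recognizes {1}: if a one-state TM halts on the
one-letter input `1`, it halts on `1^k` for every k ≥ 1. -/
theorem oneState_halts_on_all_ones :
    ∀ (Γ : Type) (M : OneStateTM Γ) (one : Γ), one ≠ M.blank →
      M.HaltsOn [one] → ∀ k : ℕ, 1 ≤ k → M.HaltsOn (List.replicate k one) := by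
  intro Γ M one _ h1 k hk
  cases hhalt : M.halt one with
  | true => exact M.haltsFrom_of_halt (by simp [OneStateTM.initTape_replicate]; omega) hhalt
  | false =>
    cases hdir : (M.δ one).2 with
    | L =>
      obtain ⟨j, rfl⟩ : ∃ j, k = j + 1 := ⟨k - 1, by omega⟩
      exact OneStateTM.haltsOn_cons_of_move_left hhalt hdir h1 _
    | R => exact OneStateTM.haltsOn_replicate_of_move_right hhalt hdir h1 hk
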